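/- arXiv:2004.08337 — 4 statements merged into one kernel-verified Lean document; each statement's English description precedes it below -/
import Mathlib

section
/- Let ρ be a density operator on ℂ²⊗ℂ² with correlation matrix T given by T_{jk} = tr(ρ (σ_j ⊗ σ_k)), where σ_j are the Pauli matrices. For any CHSH operator S = A⊗(B+B') + A'⊗(B−B'), where A = a·σ, A' = a'·σ, B = b·σ, B' = b'·σ with a, a', b, b' unit vectors in ℝ³, one has tr(ρ S) ≤ 2√(λ₁ + λ₂), where λ₁ ≥ λ₂ ≥ λ₃ are the eigenvalues of TᵀT. -/
/-!
By linearity, `tr(ρS) = a·T(b+b') + a'·T(b-b')`, and Cauchy–Schwarz bounds this by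
`|Tc| + |Tc'|` with `c = b+b'`, `c' = b-b'`. These vectors are orthogonal with
`|c|² + |c'|² = 4`, and `|Tc|² = ⟨c, TᵀT c⟩`. In an eigenbasis of `TᵀT`, Ky Fan's principle
(`⟨u, Mu⟩ + ⟨v, Mv⟩ ≤ λ₁ + λ₂` for orthonormal `u, v`), in a form homogeneous in `c` and `c'`,
gives `|Tc|² |c'|² + |Tc'|² |c|² ≤ (λ₁ + λ₂) |c|² |c'|²`, and this yields
`|Tc| + |Tc'| ≤ √((λ₁ + λ₂)(|c|² + |c'|²)) = 2√(λ₁ + λ₂)`.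
-/

open Matrix Complex
open scoped Kronecker ComplexOrder

/-- The Pauli matrices `σ₁ = X`, `σ₂ = Y`, `σ₃ = Z`. -/
noncomputable def pauli : Fin 3 → Matrix (Fin 2) (Fin 2) ℂ
  | 0 => !![0, 1; 1, 0]
  | 1 => !![0, -Complex.I; Complex.I, 0]
  | 2 => !![1, 0; 0, -1]

/-- The qubit observable `v·σ` associated to a vector `v ∈ ℝ³`. -/
noncomputable def obsOf (v : Fin 3 → ℝ) : Matrix (Fin 2) (Fin 2) ℂ :=
  ∑ i, (v i : ℂ) • pauli i

section Kronecker

variable {ι l m n p α : Type*} [Fintype ι] [NonUnitalNonAssocSemiring α]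

theorem Matrix.sum_kronecker (A : ι → Matrix l m α) (B : Matrix n p α) :
    (∑ i, A i) ⊗ₖ B = ∑ i, A i ⊗ₖ B := by
  ext
  simp [sum_apply, Finset.sum_mul]

theorem Matrix.kronecker_sum (A : Matrix l m α) (B : ι → Matrix n p α) :
    A ⊗ₖ (∑ i, B i) = ∑ i, A ⊗ₖ B i := by
  ext
  simp [sum_apply, Finset.mul_sum]

end Kronecker

lemma obsOf_add (u v : Fin 3 → ℝ) : obsOf (u + v) = obsOf u + obsOf v := by
  simp only [obsOf, Pi.add_apply, ofReal_add, add_smul, Finset.sum_add_distrib]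

lemma obsOf_sub (u v : Fin 3 → ℝ) : obsOf (u - v) = obsOf u - obsOf v := by
  simp only [obsOf, Pi.sub_apply, ofReal_sub, sub_smul, Finset.sum_sub_distrib]

lemma re_trace_mul_kronecker_obsOf (ρ : Matrix (Fin 2 × Fin 2) (Fin 2 × Fin 2) ℂ)
    {T : Matrix (Fin 3) (Fin 3) ℝ} (hT : ∀ j k, T j k = ((ρ * (pauli j ⊗ₖ pauli k)).trace).re)
    (x y : Fin 3 → ℝ) :
    ((ρ * (obsOf x ⊗ₖ obsOf y)).trace).re = x ⬝ᵥ (T *ᵥ y) := by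
  simp only [obsOf, sum_kronecker, kronecker_sum, smul_kronecker, kronecker_smul,
    Matrix.mul_smul, trace_sum, trace_smul, smul_eq_mul, re_sum, re_ofReal_mul, hT, dotProduct,
    mulVec, Finset.mul_sum]
  rw [Finset.sum_comm]
  exact Finset.sum_congr rfl fun j _ => Finset.sum_congr rfl fun k _ => by ring

section DotProduct

variable {n : Type*} [Fintype n]

lemma dotProduct_self_eq_sum_sq (v : n → ℝ) : v ⬝ᵥ v = ∑ i, v i ^ 2 := by
  simp only [dotProduct, sq]

lemma dotProduct_le_sqrt_mul_sqrt (x w : n → ℝ) : x ⬝ᵥ w ≤ √(x ⬝ᵥ x) * √(w ⬝ᵥ w) := by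
  rw [dotProduct_self_eq_sum_sq, dotProduct_self_eq_sum_sq]
  exact Real.sum_mul_le_sqrt_mul_sqrt Finset.univ x w

end DotProduct

namespace Matrix.IsHermitian

variable {n : Type*} [Fintype n] [DecidableEq n] {M : Matrix n n ℝ}

noncomputable def eigenCoord (hM : M.IsHermitian) (c : n → ℝ) (i : n) : ℝ :=
  ⇑(hM.eigenvectorBasis i) ⬝ᵥ c

theorem eigenCoord_dotProduct_eigenCoord (hM : M.IsHermitian) (c c' : n → ℝ) :
    hM.eigenCoord c ⬝ᵥ hM.eigenCoord c' = c ⬝ᵥ c' := by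
  have := hM.eigenvectorBasis.sum_inner_mul_inner (WithLp.toLp 2 c) (WithLp.toLp 2 c')
  simp only [EuclideanSpace.inner_eq_star_dotProduct, star_trivial, dotProduct_comm c'] at this
  exact this

theorem eigenCoord_mulVec (hM : M.IsHermitian) (c : n → ℝ) (i : n) :
    hM.eigenCoord (M *ᵥ c) i = hM.eigenvalues i * hM.eigenCoord c i := by
  have hMT : Mᵀ = M := by simpa [conjTranspose_eq_transpose_of_trivial] using hM.eq
  rw [eigenCoord, dotProduct_mulVec, ← mulVec_transpose, hMT, hM.mulVec_eigenvectorBasis,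
    smul_dotProduct, smul_eq_mul, eigenCoord]

theorem dotProduct_mulVec_eq_sum (hM : M.IsHermitian) (c : n → ℝ) :
    c ⬝ᵥ (M *ᵥ c) = ∑ i, hM.eigenvalues i * hM.eigenCoord c i ^ 2 := by
  rw [← eigenCoord_dotProduct_eigenCoord hM]
  simp only [dotProduct, eigenCoord_mulVec]
  exact Finset.sum_congr rfl fun i _ => by ring

end Matrix.IsHermitian

theorem mulVec_dotProduct_mulVec_eq_sum {m n : Type*} [Fintype m] [Fintype n] [DecidableEq n]
    (T : Matrix m n ℝ) (h : (Tᵀ * T).IsHermitian) (c : n → ℝ) :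
    T *ᵥ c ⬝ᵥ T *ᵥ c = ∑ i, h.eigenvalues i * h.eigenCoord c i ^ 2 := by
  rw [← h.dotProduct_mulVec_eq_sum, ← mulVec_mulVec, dotProduct_mulVec c, vecMul_transpose]

/- Bessel's inequality for the orthogonal pair `y, z` against the `i`-th basis vector,
multiplied through by `|y|² |z|²`. -/
lemma sq_mul_add_sq_mul_le_of_dotProduct_eq_zero {y z : Fin 3 → ℝ} (h : y ⬝ᵥ z = 0)
    (i : Fin 3) : y i ^ 2 * (z ⬝ᵥ z) + z i ^ 2 * (y ⬝ᵥ y) ≤ (y ⬝ᵥ y) * (z ⬝ᵥ z) := by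
  simp only [dotProduct, Fin.sum_univ_three] at *
  fin_cases i <;> simp only [Fin.zero_eta, Fin.mk_one, Fin.reduceFinMk] <;>
    nlinarith [sq_nonneg (y 0 * z 1 - y 1 * z 0), sq_nonneg (y 0 * z 2 - y 2 * z 0),
      sq_nonneg (y 1 * z 2 - y 2 * z 1), congrArg (· * (y 1 * z 1 + y 2 * z 2 - y 0 * z 0)) h,
      congrArg (· * (y 0 * z 0 + y 2 * z 2 - y 1 * z 1)) h,
      congrArg (· * (y 0 * z 0 + y 1 * z 1 - y 2 * z 2)) h]

lemma sum_mul_le_of_antitone {l w : Fin 3 → ℝ} (hl : Antitone l) {s : ℝ} (hw : ∀ i, w i ≤ s)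
    (hsum : ∑ i, w i = 2 * s) : ∑ i, l i * w i ≤ (l 0 + l 1) * s := by
  rw [Fin.sum_univ_three] at hsum ⊢
  rw [show w 2 = 2 * s - w 0 - w 1 by linarith]
  -- the difference of the two sides is `(l 0 - l 2) (w 0 - s) + (l 1 - l 2) (w 1 - s)`
  nlinarith [mul_le_mul_of_nonneg_left (hw 0) (sub_nonneg.mpr (hl (by decide : (0 : Fin 3) ≤ 2))),
    mul_le_mul_of_nonneg_left (hw 1) (sub_nonneg.mpr (hl (by decide : (1 : Fin 3) ≤ 2)))]

/- Ky Fan's principle for the diagonal matrix with entries `l`, applied to `y / |y|` and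
`z / |z|`. -/
lemma kyFan_fin_three {l y z : Fin 3 → ℝ} (hl : Antitone l) (h : y ⬝ᵥ z = 0) :
    (∑ i, l i * y i ^ 2) * (z ⬝ᵥ z) + (∑ i, l i * z i ^ 2) * (y ⬝ᵥ y) ≤
      (l 0 + l 1) * ((y ⬝ᵥ y) * (z ⬝ᵥ z)) := by
  have hsum : ∑ i, (y i ^ 2 * (z ⬝ᵥ z) + z i ^ 2 * (y ⬝ᵥ y)) = 2 * ((y ⬝ᵥ y) * (z ⬝ᵥ z)) := by
    simp only [Finset.sum_add_distrib, ← Finset.sum_mul, dotProduct, sq]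
    ring
  calc _ = ∑ i, l i * (y i ^ 2 * (z ⬝ᵥ z) + z i ^ 2 * (y ⬝ᵥ y)) := by
        simp only [Finset.sum_mul, ← Finset.sum_add_distrib]
        exact Finset.sum_congr rfl fun i _ => by ring
    _ ≤ _ := sum_mul_le_of_antitone hl (sq_mul_add_sq_mul_le_of_dotProduct_eq_zero h) hsum

lemma sqrt_add_sqrt_le_sqrt_mul_add {A B P Q K : ℝ} (hA : 0 ≤ A) (hB : 0 ≤ B) (hP : 0 ≤ P)
    (hQ : 0 ≤ Q) (hAP : A ≤ K * P) (hBQ : B ≤ K * Q) (h : A * Q + B * P ≤ K * (P * Q)) :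
    √A + √B ≤ √(K * (P + Q)) := by
  rcases hP.eq_or_lt with rfl | hP
  · obtain rfl : A = 0 := le_antisymm (by simpa using hAP) hA
    simpa using Real.sqrt_le_sqrt hBQ
  rcases hQ.eq_or_lt with rfl | hQ
  · obtain rfl : B = 0 := le_antisymm (by simpa using hBQ) hB
    simpa using Real.sqrt_le_sqrt hAP
  apply Real.le_sqrt_of_sq_le
  refine le_of_mul_le_mul_right ?_ (mul_pos hP hQ)
  calc (√A + √B) ^ 2 * (P * Q) ≤ (A * Q + B * P) * (P + Q) := by
        linear_combination sq_nonneg (√A * Q - √B * P) + (P * Q + Q ^ 2) * Real.sq_sqrt hA +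
          (P * Q + P ^ 2) * Real.sq_sqrt hB
    _ ≤ K * (P * Q) * (P + Q) := mul_le_mul_of_nonneg_right h (by positivity)
    _ = K * (P + Q) * (P * Q) := by ring

lemma sqrt_add_sqrt_le_of_dotProduct_eq_zero {l y z : Fin 3 → ℝ} (hl : Antitone l)
    (hl2 : 0 ≤ l 2) (h : y ⬝ᵥ z = 0) :
    √(∑ i, l i * y i ^ 2) + √(∑ i, l i * z i ^ 2) ≤ √((l 0 + l 1) * (y ⬝ᵥ y + z ⬝ᵥ z)) := by
  have hl_nonneg (i : Fin 3) : 0 ≤ l i := hl2.trans (hl (Fin.le_last i))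
  have h_nonneg (v : Fin 3 → ℝ) : 0 ≤ ∑ i, l i * v i ^ 2 :=
    Finset.sum_nonneg fun i _ => mul_nonneg (hl_nonneg i) (sq_nonneg _)
  have h_le (v : Fin 3 → ℝ) : ∑ i, l i * v i ^ 2 ≤ (l 0 + l 1) * (v ⬝ᵥ v) := by
    rw [dotProduct_self_eq_sum_sq, Finset.mul_sum]
    refine Finset.sum_le_sum fun i _ => mul_le_mul_of_nonneg_right ?_ (sq_nonneg _)
    linarith [hl (Fin.zero_le i), hl_nonneg 1]
  exact sqrt_add_sqrt_le_sqrt_mul_add (h_nonneg y) (h_nonneg z) (dotProduct_self_star_nonneg y)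
    (dotProduct_self_star_nonneg z) (h_le y) (h_le z) (kyFan_fin_three hl h)

theorem sqrt_add_sqrt_mulVec_le_of_dotProduct_eq_zero {m : Type*} [Fintype m]
    (T : Matrix m (Fin 3) ℝ) (hT : (Tᵀ * T).IsHermitian) {lam : Fin 3 → ℝ} {e : Fin 3 ≃ Fin 3}
    (hlam : lam = hT.eigenvalues ∘ e) (hmono : Antitone lam) {c c' : Fin 3 → ℝ}
    (h : c ⬝ᵥ c' = 0) :
    √(T *ᵥ c ⬝ᵥ T *ᵥ c) + √(T *ᵥ c' ⬝ᵥ T *ᵥ c') ≤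
      √((lam 0 + lam 1) * (c ⬝ᵥ c + c' ⬝ᵥ c')) := by
  have hlam2 : 0 ≤ lam 2 := by
    have hTT : (Tᵀ * T).PosSemidef := by
      simpa [conjTranspose_eq_transpose_of_trivial] using posSemidef_conjTranspose_mul_self T
    exact hlam ▸ hTT.eigenvalues_nonneg (e 2)
  have hnormSq (v : Fin 3 → ℝ) :
      T *ᵥ v ⬝ᵥ T *ᵥ v = ∑ i, lam i * (hT.eigenCoord v ∘ e) i ^ 2 := by
    rw [mulVec_dotProduct_mulVec_eq_sum, hlam, ← Equiv.sum_comp e]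
    rfl
  have hcoord (v w : Fin 3 → ℝ) : (hT.eigenCoord v ∘ e) ⬝ᵥ (hT.eigenCoord w ∘ e) = v ⬝ᵥ w := by
    rw [comp_equiv_dotProduct_comp_equiv, hT.eigenCoord_dotProduct_eigenCoord]
  rw [hnormSq, hnormSq, ← hcoord c c, ← hcoord c' c']
  exact sqrt_add_sqrt_le_of_dotProduct_eq_zero hmono hlam2 ((hcoord c c').trans h)

theorem stmt3_general (ρ : Matrix (Fin 2 × Fin 2) (Fin 2 × Fin 2) ℂ)
    (T : Matrix (Fin 3) (Fin 3) ℝ)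
    (hT : ∀ j k, T j k = ((ρ * (pauli j ⊗ₖ pauli k)).trace).re)
    (hHerm : (Tᵀ * T).IsHermitian) (lam : Fin 3 → ℝ) (e : Fin 3 ≃ Fin 3)
    (hlam : lam = hHerm.eigenvalues ∘ e) (hmono : Antitone lam)
    (a a' b b' : Fin 3 → ℝ)
    (ha : ∑ i, a i ^ 2 = 1) (ha' : ∑ i, a' i ^ 2 = 1)
    (hb : ∑ i, b i ^ 2 = 1) (hb' : ∑ i, b' i ^ 2 = 1)
    (S : Matrix (Fin 2 × Fin 2) (Fin 2 × Fin 2) ℂ)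
    (hS : S = obsOf a ⊗ₖ (obsOf b + obsOf b') + obsOf a' ⊗ₖ (obsOf b - obsOf b')) :
    ((ρ * S).trace).re ≤ 2 * Real.sqrt (lam 0 + lam 1) := by
  rw [← dotProduct_self_eq_sum_sq] at ha ha' hb hb'
  have horth : (b + b') ⬝ᵥ (b - b') = 0 := by
    simp only [add_dotProduct, dotProduct_sub, dotProduct_comm b' b, hb, hb']
    ring
  have hnorm : (b + b') ⬝ᵥ (b + b') + (b - b') ⬝ᵥ (b - b') = 4 := by
    simp only [add_dotProduct, sub_dotProduct, dotProduct_add, dotProduct_sub,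
      dotProduct_comm b' b, hb, hb']
    ring
  have hcs {x : Fin 3 → ℝ} (hx : x ⬝ᵥ x = 1) (w : Fin 3 → ℝ) : x ⬝ᵥ w ≤ √(w ⬝ᵥ w) := by
    simpa [hx] using dotProduct_le_sqrt_mul_sqrt x w
  calc ((ρ * S).trace).re = a ⬝ᵥ (T *ᵥ (b + b')) + a' ⬝ᵥ (T *ᵥ (b - b')) := by
        rw [hS, ← obsOf_add, ← obsOf_sub, Matrix.mul_add, trace_add, add_re,
          re_trace_mul_kronecker_obsOf ρ hT, re_trace_mul_kronecker_obsOf ρ hT]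
    _ ≤ √(T *ᵥ (b + b') ⬝ᵥ T *ᵥ (b + b')) + √(T *ᵥ (b - b') ⬝ᵥ T *ᵥ (b - b')) :=
        add_le_add (hcs ha _) (hcs ha' _)
    _ ≤ √((lam 0 + lam 1) * 4) :=
        hnorm ▸ sqrt_add_sqrt_mulVec_le_of_dotProduct_eq_zero T hHerm hlam hmono horth
    _ = 2 * √(lam 0 + lam 1) := by
        rw [Real.sqrt_mul' _ (by norm_num), show (4 : ℝ) = 2 ^ 2 by norm_num,
          Real.sqrt_sq (by norm_num), mul_comm]

/-- Horodecki upper bound: for a two-qubit density operator `ρ` with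
correlation matrix `T`, every CHSH operator `S = A⊗(B+B') + A'⊗(B−B')` built from unit
vectors satisfies `tr(ρS) ≤ 2√(λ₁+λ₂)`, with `λ₁ ≥ λ₂ ≥ λ₃` the eigenvalues of `TᵀT`. -/
theorem stmt3 (ρ : Matrix (Fin 2 × Fin 2) (Fin 2 × Fin 2) ℂ)
    (hρ : ρ.PosSemidef) (htr : ρ.trace = 1)
    (T : Matrix (Fin 3) (Fin 3) ℝ)
    (hT : ∀ j k, T j k = ((ρ * (pauli j ⊗ₖ pauli k)).trace).re)
    (hHerm : (Tᵀ * T).IsHermitian) (lam : Fin 3 → ℝ) (e : Fin 3 ≃ Fin 3)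
    (hlam : lam = hHerm.eigenvalues ∘ e) (hmono : Antitone lam)
    (a a' b b' : Fin 3 → ℝ)
    (ha : ∑ i, a i ^ 2 = 1) (ha' : ∑ i, a' i ^ 2 = 1)
    (hb : ∑ i, b i ^ 2 = 1) (hb' : ∑ i, b' i ^ 2 = 1)
    (S : Matrix (Fin 2 × Fin 2) (Fin 2 × Fin 2) ℂ)
    (hS : S = obsOf a ⊗ₖ (obsOf b + obsOf b') + obsOf a' ⊗ₖ (obsOf b - obsOf b')) :
    ((ρ * S).trace).re ≤ 2 * Real.sqrt (lam 0 + lam 1) :=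
  stmt3_general ρ T hT hHerm lam e hlam hmono a a' b b' ha ha' hb hb' S hS
end

section
/- For any two-qubit pure state |ψ⟩ (unit vector in ℂ²⊗ℂ²), its nonlocality N(ψ) and concurrence C(ψ) satisfy N(ψ) = 2√(1 + C(ψ)²). -/
/-!
Write `C = ‖z‖` for the concurrence amplitude `z = ⟨ψ|Y⊗Y|ψ*⟩` and `b` for the Bloch vector
of the second qubit, `b j = ⟨ψ|1⊗σⱼ|ψ⟩`. A direct computation in coordinates gives
`TᵀT = C² • 1 + b bᵀ` and `b ⬝ b = 1 - C²`, so `(TᵀT - C²)(TᵀT - 1) = 0` and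
`tr TᵀT = 1 + 2C²`. Hence the eigenvalues are `C², C², 1`, and as `C ≤ 1` the two largest
add up to `1 + C²`.
-/

open Matrix Complex
open scoped Kronecker ComplexConjugate

namespace Matrix

variable {n R : Type*} [Fintype n] [DecidableEq n] [CommRing R]

theorem scalar_add_vecMulVec_annihilated {c : R} {v : n → R} (hv : v ⬝ᵥ v = 1 - c) :
    (c • 1 + vecMulVec v v - c • 1) * (c • 1 + vecMulVec v v - 1) = 0 := by
  have hc : c • (1 : Matrix n n R) - 1 = -((v ⬝ᵥ v) • 1) := by
    rw [hv, sub_smul, one_smul]; abel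
  rw [add_sub_cancel_left, add_sub_right_comm, hc, mul_add, mul_neg, vecMulVec_mul_vecMulVec,
    mul_smul_comm, mul_one, vecMulVec_smul, neg_add_cancel]

theorem trace_scalar_add_vecMulVec (c : R) (v : n → R) :
    (c • 1 + vecMulVec v v).trace = Fintype.card n * c + v ⬝ᵥ v := by
  simp [mul_comm]

theorem IsHermitian.eigenvalues_eq_or_eq_of_mul_eq_zero {𝕜 : Type*} [RCLike 𝕜]
    {A : Matrix n n 𝕜} (hA : A.IsHermitian) {a b : ℝ}
    (h : (A - a • 1) * (A - b • 1) = 0) (i : n) :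
    hA.eigenvalues i = a ∨ hA.eigenvalues i = b := by
  set μ := hA.eigenvalues i
  set v : n → 𝕜 := ⇑(hA.eigenvectorBasis i)
  have hv : v ≠ 0 := (WithLp.ofLp_eq_zero 2).ne.2 <| hA.eigenvectorBasis.orthonormal.ne_zero i
  have hsub (c : ℝ) : (A - c • 1) *ᵥ v = (μ - c) • v := by
    rw [sub_mulVec, hA.mulVec_eigenvectorBasis i, smul_mulVec, one_mulVec, sub_smul]
  have key : ((A - a • 1) * (A - b • 1)) *ᵥ v = ((μ - a) * (μ - b)) • v := by
    rw [← mulVec_mulVec, hsub b, mulVec_smul, hsub a, smul_smul, mul_comm]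
  rw [h, zero_mulVec, eq_comm, smul_eq_zero, mul_eq_zero, sub_eq_zero, sub_eq_zero] at key
  exact key.resolve_right hv

end Matrix

noncomputable def concurrenceAmplitude (ψ : Fin 2 × Fin 2 → ℂ) : ℂ :=
  ∑ p, conj (ψ p) * ((pauli 1 ⊗ₖ pauli 1).mulVec (fun q => conj (ψ q))) p

-- Real in fact, but only the bilinear square `b ⬝ᵥ b` is needed, so it is kept complex.
noncomputable def blochVectorSnd (ψ : Fin 2 × Fin 2 → ℂ) (j : Fin 3) : ℂ :=
  ∑ p, conj (ψ p) * ((1 ⊗ₖ pauli j).mulVec ψ) p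

theorem two_mul_norm_mul_sub_mul_le (a b c d : ℂ) :
    2 * ‖a * d - b * c‖ ≤ ‖a‖ ^ 2 + ‖b‖ ^ 2 + ‖c‖ ^ 2 + ‖d‖ ^ 2 := by
  have h := norm_sub_le (a * d) (b * c)
  rw [norm_mul, norm_mul] at h
  nlinarith [sq_nonneg (‖a‖ - ‖d‖), sq_nonneg (‖b‖ - ‖c‖)]

theorem concurrenceAmplitude_eq (ψ : Fin 2 × Fin 2 → ℂ) :
    concurrenceAmplitude ψ =
      2 * (conj (ψ (0, 1)) * conj (ψ (1, 0)) - conj (ψ (0, 0)) * conj (ψ (1, 1))) := by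
  simp [concurrenceAmplitude, pauli, mulVec, kroneckerMap_apply, Fintype.sum_prod_type,
    dotProduct]
  ring

theorem norm_concurrenceAmplitude_le (ψ : Fin 2 × Fin 2 → ℂ) :
    ‖concurrenceAmplitude ψ‖ ≤ ∑ p, ‖ψ p‖ ^ 2 := by
  have h := two_mul_norm_mul_sub_mul_le (conj (ψ (0, 1))) (conj (ψ (0, 0)))
    (conj (ψ (1, 1))) (conj (ψ (1, 0)))
  simp only [Complex.norm_conj] at h
  rw [concurrenceAmplitude_eq, norm_mul, Complex.norm_two]
  simp only [Fintype.sum_prod_type, Fin.sum_univ_two]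
  linarith

theorem blochVectorSnd_dotProduct_self (ψ : Fin 2 × Fin 2 → ℂ) :
    blochVectorSnd ψ ⬝ᵥ blochVectorSnd ψ =
      (((∑ p, ‖ψ p‖ ^ 2) ^ 2 - ‖concurrenceAmplitude ψ‖ ^ 2 : ℝ) : ℂ) := by
  push_cast
  simp only [← Complex.conj_mul']
  simp [concurrenceAmplitude, blochVectorSnd, pauli, mulVec, kroneckerMap_apply,
    Fintype.sum_prod_type, Fin.sum_univ_three, dotProduct]
  grind [I_sq]

theorem sum_two_largest_eq {lam : Fin 3 → ℝ} (hmono : Antitone lam) {c : ℝ} (hc : c ≤ 1)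
    (hval : ∀ j, lam j = c ∨ lam j = 1) (hsum : ∑ j, lam j = 1 + 2 * c) :
    lam 0 + lam 1 = 1 + c := by
  have h01 : lam 1 ≤ lam 0 := hmono (by decide)
  have h12 : lam 2 ≤ lam 1 := hmono (by decide)
  rw [Fin.sum_univ_three] at hsum
  rcases hval 0 with h0 | h0 <;> rcases hval 1 with h1 | h1 <;> rcases hval 2 with h2 | h2 <;>
    linarith

section CorrelationMatrix

variable {ψ : Fin 2 × Fin 2 → ℂ} {T : Matrix (Fin 3) (Fin 3) ℝ}

theorem map_ofReal_transpose_mul_self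
    (hT : ∀ j k, (T j k : ℂ) = ∑ p, conj (ψ p) * ((pauli j ⊗ₖ pauli k).mulVec ψ) p) :
    (Tᵀ * T).map ((↑) : ℝ → ℂ) =
      ((‖concurrenceAmplitude ψ‖ ^ 2 : ℝ) : ℂ) • 1 +
        vecMulVec (blochVectorSnd ψ) (blochVectorSnd ψ) := by
  ext j k
  rw [ofReal_pow, ← Complex.conj_mul']
  simp only [map_apply, mul_apply, transpose_apply, ofReal_sum, ofReal_mul, hT]
  fin_cases j <;> fin_cases k <;>
  · simp [pauli, concurrenceAmplitude, blochVectorSnd, mulVec, kroneckerMap_apply,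
      Fintype.sum_prod_type, Fin.sum_univ_three, dotProduct, one_apply, vecMulVec_apply]
    grind [I_sq]

theorem eigenvalues_transpose_mul_self (hψ : ∑ p, ‖ψ p‖ ^ 2 = 1)
    (hT : ∀ j k, (T j k : ℂ) = ∑ p, conj (ψ p) * ((pauli j ⊗ₖ pauli k).mulVec ψ) p)
    (hHerm : (Tᵀ * T).IsHermitian) (i : Fin 3) :
    hHerm.eigenvalues i = ‖concurrenceAmplitude ψ‖ ^ 2 ∨ hHerm.eigenvalues i = 1 := by
  refine hHerm.eigenvalues_eq_or_eq_of_mul_eq_zero (map_injective ofReal_injective ?_) i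
  have hB : blochVectorSnd ψ ⬝ᵥ blochVectorSnd ψ =
      1 - ((‖concurrenceAmplitude ψ‖ ^ 2 : ℝ) : ℂ) := by
    rw [blochVectorSnd_dotProduct_self, hψ, one_pow, ofReal_sub, ofReal_one]
  have hann := scalar_add_vecMulVec_annihilated hB
  have hmap :
      ((Tᵀ * T - ‖concurrenceAmplitude ψ‖ ^ 2 • 1) * (Tᵀ * T - (1 : ℝ) • 1)).map ofReal =
      ((Tᵀ * T).map ofReal - ((‖concurrenceAmplitude ψ‖ ^ 2 : ℝ) : ℂ) • 1) *
        ((Tᵀ * T).map ofReal - 1) := by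
    ext j k
    simp [mul_apply, one_apply, apply_ite ofReal]
  dsimp only
  rwa [hmap, Matrix.map_zero _ ofReal_zero, map_ofReal_transpose_mul_self hT]

theorem sum_eigenvalues_transpose_mul_self (hψ : ∑ p, ‖ψ p‖ ^ 2 = 1)
    (hT : ∀ j k, (T j k : ℂ) = ∑ p, conj (ψ p) * ((pauli j ⊗ₖ pauli k).mulVec ψ) p)
    (hHerm : (Tᵀ * T).IsHermitian) :
    ∑ i, hHerm.eigenvalues i = 1 + 2 * ‖concurrenceAmplitude ψ‖ ^ 2 := by
  apply ofReal_injective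
  have htr := congrArg trace (map_ofReal_transpose_mul_self hT)
  rw [trace_scalar_add_vecMulVec, blochVectorSnd_dotProduct_self, hψ] at htr
  have hcast : ((Tᵀ * T).map ofReal).trace = (((Tᵀ * T).trace : ℝ) : ℂ) := by simp [trace]
  rw [hcast, hHerm.trace_eq_sum_eigenvalues] at htr
  simp only [RCLike.ofReal_real_eq_id, id] at htr
  rw [htr, Fintype.card_fin]
  push_cast
  ring

end CorrelationMatrix

/-- For any two-qubit pure state `|ψ⟩`, the nonlocality
`N(ψ) = 2√(λ₁+λ₂)` (with `λ₁ ≥ λ₂` the two largest eigenvalues of `TᵀT`, `T` the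
correlation matrix of `ψ`) and the concurrence `C(ψ) = |⟨ψ|(Y⊗Y)|ψ*⟩|` satisfy
`N(ψ) = 2√(1 + C(ψ)²)`. -/
theorem stmt7 (ψ : Fin 2 × Fin 2 → ℂ) (hψ : ∑ p, ‖ψ p‖ ^ 2 = 1)
    (T : Matrix (Fin 3) (Fin 3) ℝ)
    (hT : ∀ j k, (T j k : ℂ) =
      ∑ p, conj (ψ p) * ((pauli j ⊗ₖ pauli k).mulVec ψ) p)
    (hHerm : (Tᵀ * T).IsHermitian) (lam : Fin 3 → ℝ) (e : Fin 3 ≃ Fin 3)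
    (hlam : lam = hHerm.eigenvalues ∘ e) (hmono : Antitone lam)
    (C : ℝ)
    (hC : C = ‖(∑ p, conj (ψ p) *
      ((pauli 1 ⊗ₖ pauli 1).mulVec (fun q => conj (ψ q))) p)‖) :
    2 * Real.sqrt (lam 0 + lam 1) = 2 * Real.sqrt (1 + C ^ 2) := by
  change C = ‖concurrenceAmplitude ψ‖ at hC
  have hC1 : C ^ 2 ≤ 1 := by
    have := hψ ▸ norm_concurrenceAmplitude_le ψ
    rw [hC]
    nlinarith [norm_nonneg (concurrenceAmplitude ψ)]
  have hsum : ∑ j, lam j = 1 + 2 * C ^ 2 := by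
    rw [hlam, Function.comp_def, Equiv.sum_comp e hHerm.eigenvalues, hC,
      sum_eigenvalues_transpose_mul_self hψ hT hHerm]
  have hval (j : Fin 3) : lam j = C ^ 2 ∨ lam j = 1 := by
    rw [hlam, hC]
    exact eigenvalues_transpose_mul_self hψ hT hHerm (e j)
  rw [sum_two_largest_eq hmono hC1 hval hsum]
end

section
/- The two pure states |φ₁⟩ = cos θ|00⟩ + sin θ|11⟩ and |φ₂⟩ = sin θ|00⟩ + cos θ|11⟩ both achieve their maximal CHSH value on the operator S_{θ+} = (2/√(1+sin²2θ))(sin 2θ · σ_x⊗σ_x + σ_z⊗σ_z); that is, tr(|φ_i⟩⟨φ_i| S_{θ+}) = 2√(1+sin²2θ) for i = 1, 2. -/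
/-!
Both `σ_x⊗σ_x` and `σ_z⊗σ_z` preserve `span{|00⟩, |11⟩}`; on a real state `a|00⟩ + b|11⟩`
their expectations are `2ab` and `a² + b²`. Both states have `a² + b² = 1` and `2ab = sin 2θ`,
so with `s = sin 2θ` the expectation of `S_{θ+}` is `(2/√(1+s²))(s² + 1) = 2√(1+s²)`.
-/

open Matrix Complex
open scoped Kronecker ComplexConjugate

noncomputable def pauliX : Matrix (Fin 2) (Fin 2) ℂ := !![0, 1; 1, 0]

noncomputable def pauliZ : Matrix (Fin 2) (Fin 2) ℂ := !![1, 0; 0, -1]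

def diagState (a b : ℂ) : Fin 2 × Fin 2 → ℂ :=
  fun p => if p = (0, 0) then a else if p = (1, 1) then b else 0

theorem star_dotProduct_pauliX_kron_pauliX_mulVec_diagState (a b : ℂ) :
    star (diagState a b) ⬝ᵥ ((pauliX ⊗ₖ pauliX) *ᵥ diagState a b) =
      conj a * b + conj b * a := by
  simp [dotProduct, mulVec, Fintype.sum_prod_type, diagState, pauliX]

theorem star_dotProduct_pauliZ_kron_pauliZ_mulVec_diagState (a b : ℂ) :
    star (diagState a b) ⬝ᵥ ((pauliZ ⊗ₖ pauliZ) *ᵥ diagState a b) =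
      conj a * a + conj b * b := by
  simp [dotProduct, mulVec, Fintype.sum_prod_type, diagState, pauliZ]

theorem dotProduct_smul_add_mulVec {n R : Type*} [Fintype n] [CommSemiring R] (k c : R)
    (A B : Matrix n n R) (v w : n → R) :
    v ⬝ᵥ ((k • (c • A + B)) *ᵥ w) = k * (c * (v ⬝ᵥ (A *ᵥ w)) + v ⬝ᵥ (B *ᵥ w)) := by
  simp only [smul_mulVec, add_mulVec, dotProduct_smul, dotProduct_add, smul_eq_mul]

theorem star_dotProduct_chsh_mulVec_diagState (k c : ℂ) (a b : ℝ) :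
    star (diagState a b) ⬝ᵥ
        ((k • (c • (pauliX ⊗ₖ pauliX) + pauliZ ⊗ₖ pauliZ)) *ᵥ diagState a b) =
      k * (c * (2 * a * b : ℝ) + (a ^ 2 + b ^ 2 : ℝ)) := by
  rw [dotProduct_smul_add_mulVec, star_dotProduct_pauliX_kron_pauliX_mulVec_diagState,
    star_dotProduct_pauliZ_kron_pauliZ_mulVec_diagState]
  simp only [conj_ofReal]
  push_cast
  ring

theorem two_div_sqrt_mul_eq (s : ℝ) :
    2 / √(1 + s ^ 2) * (s * s + 1) = 2 * √(1 + s ^ 2) := by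
  rw [show s * s + 1 = 1 + s ^ 2 by ring, div_mul_eq_mul_div, mul_div_assoc, Real.div_sqrt]

theorem star_dotProduct_normalized_chsh_mulVec_diagState (s a b : ℝ)
    (hnorm : a ^ 2 + b ^ 2 = 1) (hprod : 2 * a * b = s) :
    star (diagState a b) ⬝ᵥ
        ((((2 / √(1 + s ^ 2) : ℝ) : ℂ) • ((s : ℂ) • (pauliX ⊗ₖ pauliX) + pauliZ ⊗ₖ pauliZ)) *ᵥ
          diagState a b) = (2 * √(1 + s ^ 2) : ℝ) := by
  rw [star_dotProduct_chsh_mulVec_diagState, hnorm, hprod, ← two_div_sqrt_mul_eq]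
  push_cast
  ring

theorem stmt14_general (θ : ℝ)
    (φ₁ φ₂ : Fin 2 × Fin 2 → ℂ)
    (hφ₁ : φ₁ = fun p => if p = (0, 0) then (Real.cos θ : ℂ)
      else if p = (1, 1) then (Real.sin θ : ℂ) else 0)
    (hφ₂ : φ₂ = fun p => if p = (0, 0) then (Real.sin θ : ℂ)
      else if p = (1, 1) then (Real.cos θ : ℂ) else 0)
    (S : Matrix (Fin 2 × Fin 2) (Fin 2 × Fin 2) ℂ)
    (hS : S = ((2 / Real.sqrt (1 + Real.sin (2 * θ) ^ 2) : ℝ) : ℂ) •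
      (((Real.sin (2 * θ) : ℝ) : ℂ) • (pauliX ⊗ₖ pauliX) + pauliZ ⊗ₖ pauliZ)) :
    (∑ p, conj (φ₁ p) * (S.mulVec φ₁) p) = (2 * Real.sqrt (1 + Real.sin (2 * θ) ^ 2) : ℝ) ∧
    (∑ p, conj (φ₂ p) * (S.mulVec φ₂) p) = (2 * Real.sqrt (1 + Real.sin (2 * θ) ^ 2) : ℝ) := by
  subst hφ₁ hφ₂ hS
  have hsin : 2 * Real.sin θ * Real.cos θ = Real.sin (2 * θ) := (Real.sin_two_mul θ).symm
  exact ⟨star_dotProduct_normalized_chsh_mulVec_diagState _ _ _ (Real.cos_sq_add_sin_sq θ)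
      (by rw [← hsin]; ring),
    star_dotProduct_normalized_chsh_mulVec_diagState _ _ _ (Real.sin_sq_add_cos_sq θ) hsin⟩

/-- The two states `|φ₁⟩ = cos θ|00⟩ + sin θ|11⟩` and
`|φ₂⟩ = sin θ|00⟩ + cos θ|11⟩` both attain the value `2√(1+sin²2θ)` on the single CHSH
operator `S_{θ+} = (2/√(1+sin²2θ))(sin 2θ · σ_x⊗σ_x + σ_z⊗σ_z)`. -/
theorem stmt14 (θ : ℝ) (hθ : θ ∈ Set.Ico 0 Real.pi)
    (φ₁ φ₂ : Fin 2 × Fin 2 → ℂ)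
    (hφ₁ : φ₁ = fun p => if p = (0, 0) then (Real.cos θ : ℂ)
      else if p = (1, 1) then (Real.sin θ : ℂ) else 0)
    (hφ₂ : φ₂ = fun p => if p = (0, 0) then (Real.sin θ : ℂ)
      else if p = (1, 1) then (Real.cos θ : ℂ) else 0)
    (S : Matrix (Fin 2 × Fin 2) (Fin 2 × Fin 2) ℂ)
    (hS : S = ((2 / Real.sqrt (1 + Real.sin (2 * θ) ^ 2) : ℝ) : ℂ) •
      (((Real.sin (2 * θ) : ℝ) : ℂ) • (pauliX ⊗ₖ pauliX) + pauliZ ⊗ₖ pauliZ)) :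
    (∑ p, conj (φ₁ p) * (S.mulVec φ₁) p) = (2 * Real.sqrt (1 + Real.sin (2 * θ) ^ 2) : ℝ) ∧
    (∑ p, conj (φ₂ p) * (S.mulVec φ₂) p) = (2 * Real.sqrt (1 + Real.sin (2 * θ) ^ 2) : ℝ) :=
  stmt14_general θ φ₁ φ₂ hφ₁ hφ₂ S hS
end

section
/- If M is a 2×2 real matrix with entries m_{kj} = ⟨μ_k|α_j⟩⟨β_j|ν_k⟩, where {μ₁,μ₂}, {ν₁,ν₂}, {α₁,α₂}, {β₁,β₂} are each orthonormal pairs in ℝ³, and M is orthogonal (MᵀM = I), then either (μ_k = ±α_k and ν_k = ±β_k for k=1,2) or (μ₁ = ±α₂, μ₂ = ±α₁, ν₁ = ±β₂, ν₂ = ±β₁). -/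
open Matrix

/-- The Euclidean inner product on `ℝ³`. -/
def dot3 (u v : Fin 3 → ℝ) : ℝ := ∑ i, u i * v i

lemma dot3_comm (u v : Fin 3 → ℝ) : dot3 u v = dot3 v u := by
  simp [dot3, Fin.sum_univ_three]; ring

lemma dot3_smul_smul (s t : ℝ) (u v : Fin 3 → ℝ) :
    dot3 (s • u) (t • v) = s * t * dot3 u v := by
  simp [dot3, Fin.sum_univ_three]; ring

lemma dot3_expand (u a b : Fin 3 → ℝ) (A B : ℝ) :
    dot3 (fun i => u i - A * a i - B * b i) (fun i => u i - A * a i - B * b i)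
      = dot3 u u - 2*A*dot3 u a - 2*B*dot3 u b
        + A^2*dot3 a a + B^2*dot3 b b + 2*A*B*dot3 a b := by
  simp [dot3, Fin.sum_univ_three]; ring

lemma dot3_self_nonneg (v : Fin 3 → ℝ) : 0 ≤ dot3 v v := by
  simp only [dot3, Fin.sum_univ_three]
  nlinarith [sq_nonneg (v 0), sq_nonneg (v 1), sq_nonneg (v 2)]

lemma dot3_self_eq_zero (v : Fin 3 → ℝ) (h : dot3 v v = 0) : ∀ i, v i = 0 := by
  simp only [dot3, Fin.sum_univ_three] at h
  have h0 : v 0 = 0 := by nlinarith [sq_nonneg (v 0), sq_nonneg (v 1), sq_nonneg (v 2)]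
  have h1 : v 1 = 0 := by nlinarith [sq_nonneg (v 0), sq_nonneg (v 1), sq_nonneg (v 2)]
  have h2 : v 2 = 0 := by nlinarith [sq_nonneg (v 0), sq_nonneg (v 1), sq_nonneg (v 2)]
  intro i
  fin_cases i <;> assumption

lemma bessel (u a b : Fin 3 → ℝ) (hu : dot3 u u = 1) (ha : dot3 a a = 1)
    (hb : dot3 b b = 1) (hab : dot3 a b = 0) :
    (dot3 u a)^2 + (dot3 u b)^2 ≤ 1 := by
  have h := dot3_expand u a b (dot3 u a) (dot3 u b)
  have h2 := dot3_self_nonneg (fun i => u i - dot3 u a * a i - dot3 u b * b i)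
  rw [h, hu, ha, hb, hab] at h2
  nlinarith [h2]

lemma align (u v : Fin 3 → ℝ) (hu : dot3 u u = 1) (hv : dot3 v v = 1)
    (hc : (dot3 u v)^2 = 1) : u = dot3 u v • v := by
  have h := dot3_expand u v v (dot3 u v) 0
  rw [hu, hv] at h
  have h2 : dot3 (fun i => u i - dot3 u v * v i - 0 * v i)
      (fun i => u i - dot3 u v * v i - 0 * v i) = 0 := by rw [h]; nlinarith [hc]
  have h3 := dot3_self_eq_zero _ h2
  funext i
  have := h3 i
  simp only [Pi.smul_apply, smul_eq_mul]
  linarith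

lemma pm (s : ℝ) (h : s^2 = 1) : s = 1 ∨ s = -1 := by
  have h' : (s - 1) * (s + 1) = 0 := by nlinarith
  rcases mul_eq_zero.mp h' with h'' | h''
  · left; linarith
  · right; linarith

lemma rowlem (u w : Fin 3 → ℝ) (α β : Fin 2 → Fin 3 → ℝ)
    (hu : dot3 u u = 1) (hw : dot3 w w = 1)
    (ha0 : dot3 (α 0) (α 0) = 1) (ha1 : dot3 (α 1) (α 1) = 1)
    (ha01 : dot3 (α 0) (α 1) = 0)
    (hb0 : dot3 (β 0) (β 0) = 1) (hb1 : dot3 (β 1) (β 1) = 1)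
    (hb01 : dot3 (β 0) (β 1) = 0)
    (heq : (dot3 u (α 0) * dot3 (β 0) w)^2 + (dot3 u (α 1) * dot3 (β 1) w)^2 = 1) :
    ∃ j : Fin 2, (dot3 u (α j))^2 = 1 ∧ (dot3 (β j) w)^2 = 1 ∧
      u = dot3 u (α j) • α j ∧ w = dot3 (β j) w • β j := by
  have hbA : (dot3 u (α 0))^2 + (dot3 u (α 1))^2 ≤ 1 :=
    bessel u (α 0) (α 1) hu ha0 ha1 ha01
  have hbB : (dot3 (β 0) w)^2 + (dot3 (β 1) w)^2 ≤ 1 := by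
    have h := bessel w (β 0) (β 1) hw hb0 hb1 hb01
    rwa [dot3_comm w (β 0), dot3_comm w (β 1)] at h
  have hB0le : (dot3 (β 0) w)^2 ≤ 1 := by nlinarith [sq_nonneg (dot3 (β 1) w)]
  have hB1le : (dot3 (β 1) w)^2 ≤ 1 := by nlinarith [sq_nonneg (dot3 (β 0) w)]
  have t0 : 0 ≤ (dot3 u (α 0))^2 * (1 - (dot3 (β 0) w)^2) :=
    mul_nonneg (sq_nonneg _) (by linarith)
  have t1 : 0 ≤ (dot3 u (α 1))^2 * (1 - (dot3 (β 1) w)^2) :=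
    mul_nonneg (sq_nonneg _) (by linarith)
  have key : (dot3 u (α 0))^2 * (1 - (dot3 (β 0) w)^2)
      + (dot3 u (α 1))^2 * (1 - (dot3 (β 1) w)^2)
      = ((dot3 u (α 0))^2 + (dot3 u (α 1))^2) - 1 := by linear_combination -heq
  have key' : (dot3 u (α 0))^2 * (1 - (dot3 (β 0) w)^2)
      + (dot3 u (α 1))^2 * (1 - (dot3 (β 1) w)^2) ≤ 0 := by linarith
  have h0 : (dot3 u (α 0))^2 * (1 - (dot3 (β 0) w)^2) = 0 := by linarith
  have h1 : (dot3 u (α 1))^2 * (1 - (dot3 (β 1) w)^2) = 0 := by linarith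
  by_cases hA0 : dot3 u (α 0) = 0
  · -- j = 1
    have hA0sq0 : (dot3 u (α 0))^2 = 0 := by rw [hA0]; ring
    have e : (dot3 u (α 1))^2 * (dot3 (β 1) w)^2 = 1 := by
      linear_combination heq - (dot3 u (α 0)) * (dot3 (β 0) w)^2 * hA0
    have hmul : 0 ≤ (dot3 u (α 1))^2 * (1 - (dot3 (β 1) w)^2) :=
      mul_nonneg (sq_nonneg _) (by linarith)
    have hA1sq : (dot3 u (α 1))^2 = 1 := by nlinarith [e, hmul, hbA, hA0sq0]
    have hB1sq : (dot3 (β 1) w)^2 = 1 := by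
      linear_combination e - (dot3 (β 1) w)^2 * hA1sq
    refine ⟨1, hA1sq, hB1sq, align u (α 1) hu ha1 hA1sq, ?_⟩
    have := align w (β 1) hw hb1 (by rwa [dot3_comm w (β 1)])
    rwa [dot3_comm w (β 1)] at this
  · -- j = 0
    have hA0pos : 0 < (dot3 u (α 0))^2 := by positivity
    have hB0sq : (dot3 (β 0) w)^2 = 1 := by
      rcases mul_eq_zero.mp h0 with h | h
      · exfalso; linarith
      · linarith
    have hA1 : dot3 u (α 1) = 0 := by
      by_contra hA1
      have hA1pos : 0 < (dot3 u (α 1))^2 := by positivity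
      have hB1sq : (dot3 (β 1) w)^2 = 1 := by
        rcases mul_eq_zero.mp h1 with h | h
        · exfalso; linarith
        · linarith
      linarith [hbB]
    have hA0sq : (dot3 u (α 0))^2 = 1 := by
      linear_combination heq - (dot3 u (α 0))^2 * hB0sq
        - (dot3 u (α 1)) * (dot3 (β 1) w)^2 * hA1
    refine ⟨0, hA0sq, hB0sq, align u (α 0) hu ha0 hA0sq, ?_⟩
    have := align w (β 0) hw hb0 (by rwa [dot3_comm w (β 0)])
    rwa [dot3_comm w (β 0)] at this

/-- If `M` is the 2×2 matrix with entries
`m_{kj} = ⟨μ_k|α_j⟩⟨β_j|ν_k⟩`, built from orthonormal pairs `{μ₁,μ₂}`, `{ν₁,ν₂}`,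
`{α₁,α₂}`, `{β₁,β₂}` in ℝ³, and `M` is orthogonal, then either `μ_k = ±α_k` and
`ν_k = ±β_k` for `k = 1,2`, or `μ₁ = ±α₂`, `μ₂ = ±α₁`, `ν₁ = ±β₂`, `ν₂ = ±β₁`. -/
theorem stmt18 (μ ν α β : Fin 2 → (Fin 3 → ℝ))
    (hμ : ∀ k l, dot3 (μ k) (μ l) = if k = l then 1 else 0)
    (hν : ∀ k l, dot3 (ν k) (ν l) = if k = l then 1 else 0)
    (hα : ∀ k l, dot3 (α k) (α l) = if k = l then 1 else 0)
    (hβ : ∀ k l, dot3 (β k) (β l) = if k = l then 1 else 0)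
    (M : Matrix (Fin 2) (Fin 2) ℝ)
    (hM : ∀ k j, M k j = dot3 (μ k) (α j) * dot3 (β j) (ν k))
    (horth : Mᵀ * M = 1) :
    ((∀ k, ∃ s : ℝ, (s = 1 ∨ s = -1) ∧ μ k = s • α k) ∧
      (∀ k, ∃ s : ℝ, (s = 1 ∨ s = -1) ∧ ν k = s • β k)) ∨
    (∃ s₁ s₂ s₃ s₄ : ℝ, (s₁ = 1 ∨ s₁ = -1) ∧ (s₂ = 1 ∨ s₂ = -1) ∧
      (s₃ = 1 ∨ s₃ = -1) ∧ (s₄ = 1 ∨ s₄ = -1) ∧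
      μ 0 = s₁ • α 1 ∧ μ 1 = s₂ • α 0 ∧ ν 0 = s₃ • β 1 ∧ ν 1 = s₄ • β 0) := by
  have hrow : M * Mᵀ = 1 := mul_eq_one_comm.mp horth
  have hμ00 : dot3 (μ 0) (μ 0) = 1 := by simpa using hμ 0 0
  have hμ11 : dot3 (μ 1) (μ 1) = 1 := by simpa using hμ 1 1
  have hμ01 : dot3 (μ 0) (μ 1) = 0 := by simpa using hμ 0 1
  have hν00 : dot3 (ν 0) (ν 0) = 1 := by simpa using hν 0 0
  have hν11 : dot3 (ν 1) (ν 1) = 1 := by simpa using hν 1 1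
  have hα00 : dot3 (α 0) (α 0) = 1 := by simpa using hα 0 0
  have hα11 : dot3 (α 1) (α 1) = 1 := by simpa using hα 1 1
  have hα01 : dot3 (α 0) (α 1) = 0 := by simpa using hα 0 1
  have hβ00 : dot3 (β 0) (β 0) = 1 := by simpa using hβ 0 0
  have hβ11 : dot3 (β 1) (β 1) = 1 := by simpa using hβ 1 1
  have hβ01 : dot3 (β 0) (β 1) = 0 := by simpa using hβ 0 1
  have row : ∀ k : Fin 2, (dot3 (μ k) (α 0) * dot3 (β 0) (ν k))^2
      + (dot3 (μ k) (α 1) * dot3 (β 1) (ν k))^2 = 1 := by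
    intro k
    have h := congrFun (congrFun hrow k) k
    simp [Matrix.mul_apply, Matrix.transpose_apply, Fin.sum_univ_two,
      Matrix.one_apply, hM] at h
    linear_combination h
  obtain ⟨j0, hA0sq, hB0sq, hu0, hw0⟩ :=
    rowlem (μ 0) (ν 0) α β hμ00 hν00 hα00 hα11 hα01 hβ00 hβ11 hβ01 (row 0)
  obtain ⟨j1, hA1sq, hB1sq, hu1, hw1⟩ :=
    rowlem (μ 1) (ν 1) α β hμ11 hν11 hα00 hα11 hα01 hβ00 hβ11 hβ01 (row 1)
  have hne : j0 ≠ j1 := by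
    intro hjj
    subst hjj
    rw [hu0, hu1] at hμ01
    rw [dot3_smul_smul] at hμ01
    have hjnorm : dot3 (α j0) (α j0) = 1 := by simpa using hα j0 j0
    rw [hjnorm] at hμ01
    have : (0:ℝ) = 1 := by
      linear_combination (-(dot3 (μ 0) (α j0) * dot3 (μ 1) (α j0))) * hμ01
        + (dot3 (μ 1) (α j0))^2 * hA0sq + hA1sq
    norm_num at this
  have hj0 : j0 = 0 ∨ j0 = 1 := by omega
  have hj1 : j1 = 0 ∨ j1 = 1 := by omega
  rcases hj0 with rfl | rfl <;> rcases hj1 with rfl | rfl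
  · exact absurd rfl hne
  · -- j0 = 0, j1 = 1 : left disjunct
    left
    constructor
    · intro k
      have hk : k = 0 ∨ k = 1 := by omega
      rcases hk with rfl | rfl
      · exact ⟨_, pm _ hA0sq, hu0⟩
      · exact ⟨_, pm _ hA1sq, hu1⟩
    · intro k
      have hk : k = 0 ∨ k = 1 := by omega
      rcases hk with rfl | rfl
      · exact ⟨_, pm _ hB0sq, hw0⟩
      · exact ⟨_, pm _ hB1sq, hw1⟩
  · -- j0 = 1, j1 = 0 : right disjunct
    right
    exact ⟨_, _, _, _, pm _ hA0sq, pm _ hA1sq, pm _ hB0sq, pm _ hB1sq,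
      hu0, hu1, hw0, hw1⟩
  · exact absurd rfl hne
end
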